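/- arXiv:2402.17273 — 2 statements merged into one kernel-verified Lean document; each statement's English description precedes it below -/
import Mathlib

section
/- (Jacobi–Anger expansion) For every z ∈ ℂ and every θ ∈ ℝ, e^{i z cos θ} = J_0(z) + Σ_{s ∈ ℤ, s ≠ 0} i^s J_s(z) e^{i s θ}, where the series on the right-hand side converges absolutely. -/
/-- Bessel function of the first kind of integer order `s`, defined by Bessel's integral. -/
noncomputable def besselJ (s : ℤ) (z : ℂ) : ℂ :=
  (1 / (2 * (Real.pi : ℂ))) *
    ∫ τ in (-Real.pi)..Real.pi,
      Complex.exp (Complex.I * (z * (Real.sin τ : ℂ) - (s : ℂ) * (τ : ℂ)))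

/-! The function `τ ↦ exp (i z sin τ)` is smooth and `2π`-periodic, and Bessel's integral says
precisely that its `n`-th Fourier coefficient on `[-π, π]` is `J_n(z)`. Two integrations by parts
make these coefficients `O(1/n²)`, so its Fourier series converges absolutely and pointwise.
Evaluating it at `τ = θ + π/2`, where `sin τ = cos θ` and `e^{inτ} = iⁿ e^{inθ}`, gives the
expansion. -/

open Complex MeasureTheory Real Set
open scoped Interval

theorem Function.Periodic.deriv {𝕜 F : Type*} [NontriviallyNormedField 𝕜] [NormedAddCommGroup F]
    [NormedSpace 𝕜 F] {f : 𝕜 → F} {c : 𝕜} (h : Function.Periodic f c) :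
    Function.Periodic (deriv f) c := fun x => by
  rw [← deriv_comp_add_const, show (fun y => f (y + c)) = f from funext h]

section FourierDecay

variable {a b : ℝ} (hab : a < b) {f : ℝ → ℂ}

include hab in
theorem fourierCoeffOn_of_hasDerivAt_of_eq {f' : ℝ → ℂ} {n : ℤ} (hn : n ≠ 0)
    (hf : ∀ x ∈ [[a, b]], HasDerivAt f (f' x) x) (hf' : IntervalIntegrable f' volume a b)
    (hfab : f b = f a) :
    fourierCoeffOn hab f n = (b - a) / (2 * π * I * n) * fourierCoeffOn hab f' n := by
  rw [fourierCoeffOn_of_hasDerivAt hab hn hf hf', hfab, sub_self, mul_zero, zero_sub]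
  field_simp

theorem norm_fourierCoeffOn_le {C : ℝ} (hf : ∀ x ∈ Ioc a b, ‖f x‖ ≤ C) (n : ℤ) :
    ‖fourierCoeffOn hab f n‖ ≤ C := by
  have hba : 0 < b - a := sub_pos.mpr hab
  have hint : ‖∫ x in a..b, fourier (-n) (x : AddCircle (b - a)) • f x‖ ≤ C * |b - a| :=
    intervalIntegral.norm_integral_le_of_norm_le_const fun x hx => by
      rw [norm_smul, fourier_apply, Circle.norm_coe, one_mul]
      exact hf x (uIoc_of_le hab.le ▸ hx)
  rw [abs_of_pos hba] at hint
  rw [fourierCoeffOn_eq_integral, norm_smul, Real.norm_of_nonneg (by positivity)]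
  calc 1 / (b - a) * ‖_‖ ≤ 1 / (b - a) * (C * (b - a)) := by gcongr
    _ = C := by field_simp

include hab in
theorem exists_norm_fourierCoeffOn_le_div_sq (hf : ContDiff ℝ 2 f)
    (hper : Function.Periodic f (b - a)) :
    ∃ C, ∀ n : ℤ, n ≠ 0 → ‖fourierCoeffOn hab f n‖ ≤ C / (n : ℝ) ^ 2 := by
  obtain ⟨hf₀, -, hf₁⟩ := contDiff_succ_iff_deriv (n := 1).mp hf
  obtain ⟨hf₁', -, hf₂⟩ := contDiff_succ_iff_deriv (n := 0).mp hf₁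
  have hperiod {g : ℝ → ℂ} (hg : Function.Periodic g (b - a)) : g b = g a := by
    simpa using hg a
  obtain ⟨C, hC⟩ := isCompact_Icc.exists_bound_of_continuousOn (hf₂.continuous.continuousOn
    (s := Icc a b))
  refine ⟨((b - a) / (2 * π)) ^ 2 * C, fun n hn => ?_⟩
  rw [fourierCoeffOn_of_hasDerivAt_of_eq hab hn (fun x _ => (hf₀ x).hasDerivAt)
      (hf₁.continuous.intervalIntegrable a b) (hperiod hper),
    fourierCoeffOn_of_hasDerivAt_of_eq hab hn (fun x _ => (hf₁' x).hasDerivAt)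
      (hf₂.continuous.intervalIntegrable a b) (hperiod hper.deriv)]
  have hk : ‖((b : ℂ) - a) / (2 * π * I * n)‖ = (b - a) / (2 * π) / |(n : ℝ)| := by
    rw [← ofReal_sub, norm_div, norm_real, Real.norm_of_nonneg (sub_pos.mpr hab).le,
      norm_mul, norm_mul, norm_mul, norm_I, norm_intCast, norm_real,
      Real.norm_of_nonneg pi_pos.le, Complex.norm_two, mul_one, div_div]
  have hc : ‖fourierCoeffOn hab (deriv (deriv f)) n‖ ≤ C :=
    norm_fourierCoeffOn_le hab (fun x hx => hC x (Ioc_subset_Icc_self hx)) n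
  rw [norm_mul, norm_mul, hk]
  calc (b - a) / (2 * π) / |(n : ℝ)| * ((b - a) / (2 * π) / |(n : ℝ)| * _)
      ≤ (b - a) / (2 * π) / |(n : ℝ)| * ((b - a) / (2 * π) / |(n : ℝ)| * C) := by gcongr
    _ = ((b - a) / (2 * π)) ^ 2 * C / (n : ℝ) ^ 2 := by
      rw [← sq_abs (n : ℝ)]; ring

include hab in
theorem summable_norm_fourierCoeffOn_of_contDiff (hf : ContDiff ℝ 2 f)
    (hper : Function.Periodic f (b - a)) :
    Summable fun n : ℤ => ‖fourierCoeffOn hab f n‖ := by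
  obtain ⟨C, hC⟩ := exists_norm_fourierCoeffOn_le_div_sq hab hf hper
  refine Summable.of_norm_bounded_eventually
    ((summable_one_div_int_pow.mpr one_lt_two).mul_left C) ?_
  filter_upwards [(Set.finite_singleton (0 : ℤ)).compl_mem_cofinite] with n hn
  rw [norm_norm, mul_one_div]
  exact hC n hn

include hab in
theorem hasSum_fourierCoeffOn_mul_fourier_of_contDiff (hf : ContDiff ℝ 2 f)
    (hper : Function.Periodic f (b - a)) (x : ℝ) :
    HasSum (fun n : ℤ => fourierCoeffOn hab f n * fourier n (x : AddCircle (b - a))) (f x) := by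
  have : Fact (0 < b - a) := ⟨sub_pos.mpr hab⟩
  let F : C(AddCircle (b - a), ℂ) := ⟨hper.lift, hf.continuous.quotient_liftOn' _⟩
  have hFf (y : ℝ) : F y = f y := hper.lift_coe y
  have hF : fourierCoeff F = fourierCoeffOn hab f := funext fun n => by
    simp only [fourierCoeff_eq_intervalIntegral _ n a, fourierCoeffOn_eq_integral, add_sub_cancel,
      hFf]
  have hsum := has_pointwise_sum_fourier_series_of_summable
    (hF ▸ (summable_norm_fourierCoeffOn_of_contDiff hab hf hper).of_norm) (x : AddCircle (b - a))
  simpa only [hF, smul_eq_mul, hFf] using hsum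

end FourierDecay

theorem besselJ_eq_fourierCoeffOn (s : ℤ) (z : ℂ) :
    besselJ s z =
      fourierCoeffOn (neg_lt_self pi_pos) (fun τ => exp (I * z * (Real.sin τ : ℂ))) s := by
  have h2π : ((π - -π : ℝ) : ℂ) = 2 * π := by push_cast; ring
  rw [fourierCoeffOn_eq_integral, besselJ, real_smul]
  congr 1
  · push_cast; ring
  · refine intervalIntegral.integral_congr fun τ _ => ?_
    rw [smul_eq_mul, fourier_coe_apply, ← Complex.exp_add, h2π]
    congr 1
    field_simp
    push_cast
    ring

theorem fourier_coe_add_pi_div_two (n : ℤ) (θ : ℝ) :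
    (fourier n ((θ + π / 2 : ℝ) : AddCircle (π - -π)) : ℂ) = I ^ n * exp (I * n * θ) := by
  rw [fourier_coe_apply, show I ^ n = exp (n * (π / 2 * I)) by
    rw [exp_int_mul, exp_pi_div_two_mul_I], ← Complex.exp_add]
  congr 1
  field_simp
  push_cast
  ring

section JacobiAnger

variable (z : ℂ) (θ : ℝ)

theorem contDiff_exp_I_mul_sin : ContDiff ℝ 2 fun τ : ℝ => exp (I * z * (Real.sin τ : ℂ)) :=
  (contDiff_const.mul (ofRealCLM.contDiff.comp contDiff_sin)).cexp

theorem periodic_exp_I_mul_sin : Function.Periodic (fun τ : ℝ => exp (I * z * (Real.sin τ : ℂ)))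
    (π - -π) := fun τ => by
  simp only [sub_neg_eq_add, ← two_mul, Real.sin_add_two_pi]

theorem jacobiAnger_term_eq (n : ℤ) :
    I ^ n * besselJ n z * exp (I * n * θ) =
      fourierCoeffOn (neg_lt_self pi_pos) (fun τ => exp (I * z * (Real.sin τ : ℂ))) n *
        fourier n ((θ + π / 2 : ℝ) : AddCircle (π - -π)) := by
  rw [besselJ_eq_fourierCoeffOn, fourier_coe_add_pi_div_two]
  ring

theorem hasSum_jacobiAnger :
    HasSum (fun n : ℤ => I ^ n * besselJ n z * exp (I * n * θ))
      (exp (I * z * (Real.cos θ : ℂ))) := by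
  simpa only [jacobiAnger_term_eq, Real.sin_add_pi_div_two] using
    hasSum_fourierCoeffOn_mul_fourier_of_contDiff _ (contDiff_exp_I_mul_sin z)
      (periodic_exp_I_mul_sin z) (θ + π / 2)

theorem summable_norm_jacobiAnger :
    Summable fun n : ℤ => ‖I ^ n * besselJ n z * exp (I * n * θ)‖ := by
  simpa only [jacobiAnger_term_eq, norm_mul, fourier_apply, Circle.norm_coe, mul_one] using
    summable_norm_fourierCoeffOn_of_contDiff _ (contDiff_exp_I_mul_sin z) (periodic_exp_I_mul_sin z)

end JacobiAnger

/-- Jacobi–Anger expansion: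
`e^{i z cos θ} = J_0(z) + Σ_{s ≠ 0} i^s J_s(z) e^{i s θ}`, the series converging absolutely. -/
theorem stmt1 (z : ℂ) (θ : ℝ) :
    (Complex.exp (Complex.I * z * (Real.cos θ : ℂ)) =
      besselJ 0 z + ∑' s : {s : ℤ // s ≠ 0},
        Complex.I ^ (s : ℤ) * besselJ s z *
          Complex.exp (Complex.I * ((s : ℤ) : ℂ) * (θ : ℂ))) ∧
    Summable (fun s : {s : ℤ // s ≠ 0} =>
      ‖Complex.I ^ (s : ℤ) * besselJ s z *
        Complex.exp (Complex.I * ((s : ℤ) : ℂ) * (θ : ℂ))‖) := by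
  have hsum := hasSum_jacobiAnger z θ
  refine ⟨?_, (summable_norm_jacobiAnger z θ).subtype _⟩
  rw [← hsum.tsum_eq, ← hsum.summable.tsum_subtype_add_tsum_subtype_compl {0}]
  congr 1
  simp
end

section
/- (Vanishing of the error term for large uniform arrays, Property 3) Fix z ∈ ℂ and φ ∈ ℝ. Then the averaged error term of a uniform circular array tends to zero as the number of antennas grows: lim_{N → ∞} (1/N) Σ_{n=1}^{N} E(2πn/N, φ, z) = 0; equivalently, lim_{N → ∞} Σ_{m ∈ ℤ, m ≠ 0} i^{mN} J_{mN}(z) e^{− i m N φ} = 0. -/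
/-- The error series `E(θ, φ, z) = Σ_{s ∈ ℤ, s ≠ 0} i^s J_s(z) e^{i s (θ − φ)}`. -/
noncomputable def errE (θ φ : ℝ) (z : ℂ) : ℂ :=
  ∑' s : {s : ℤ // s ≠ 0},
    Complex.I ^ (s : ℤ) * besselJ s z *
      Complex.exp (Complex.I * ((s : ℤ) : ℂ) * ((θ : ℂ) - (φ : ℂ)))

/-!
Averaging `e^{isθ}` over the angles `θ = 2πn/N` annihilates every mode `s` not divisible by `N`,
so the array average of `E(·, φ, z)` is the aliased series `Σ_{m ≠ 0} i^{mN} J_{mN}(z) e^{-imNφ}`.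
Since Bessel's integrand is `2π`-periodic, the integral of its `τ`-derivative vanishes, which is
the recurrence `2s J_s(z) = z (J_{s-1}(z) + J_{s+1}(z))`. Applied twice, starting from
`|J_s(z)| ≤ e^{|z|}`, it gives `|J_s(z)| ≤ C(z)/s²`; hence the aliased series is `O(1/N²)`.
-/

open Complex

noncomputable def besselIntegrand (z : ℂ) (s : ℤ) (τ : ℝ) : ℂ :=
  exp (I * (z * (Real.sin τ : ℂ) - (s : ℂ) * (τ : ℂ)))

lemma besselJ_eq_integral (s : ℤ) (z : ℂ) :
    besselJ s z = 1 / (2 * (Real.pi : ℂ)) * ∫ τ in -Real.pi..Real.pi, besselIntegrand z s τ :=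
  rfl

lemma continuous_besselIntegrand (z : ℂ) (s : ℤ) : Continuous (besselIntegrand z s) := by
  unfold besselIntegrand; fun_prop

lemma besselIntegrand_add_int (z : ℂ) (s k : ℤ) (τ : ℝ) :
    besselIntegrand z (s + k) τ = exp (-(k * τ * I)) * besselIntegrand z s τ := by
  simp only [besselIntegrand, ← exp_add]
  congr 1
  push_cast
  ring

lemma besselIntegrand_neg_pi (z : ℂ) (s : ℤ) :
    besselIntegrand z s (-Real.pi) = besselIntegrand z s Real.pi := by
  simp only [besselIntegrand, Real.sin_neg, Real.sin_pi, ofReal_neg, ofReal_zero, neg_zero]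
  rw [← mul_one (exp (I * (z * 0 - s * -Real.pi))), ← exp_int_mul_two_pi_mul_I (-s),
    ← exp_add]
  congr 1
  push_cast
  ring

lemma norm_besselIntegrand_le (z : ℂ) (s : ℤ) (τ : ℝ) :
    ‖besselIntegrand z s τ‖ ≤ Real.exp ‖z‖ := by
  have hre :
      (I * (z * (Real.sin τ : ℂ) - (s : ℂ) * (τ : ℂ))).re = -(z.im * Real.sin τ) := by
    simp only [mul_re, mul_im, sub_re, sub_im, I_re, I_im, ofReal_re, ofReal_im, intCast_re,
      intCast_im]
    ring
  rw [besselIntegrand, norm_exp, hre, Real.exp_le_exp]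
  calc -(z.im * Real.sin τ) ≤ |z.im| * |Real.sin τ| := (neg_le_abs _).trans (abs_mul _ _).le
    _ ≤ ‖z‖ * 1 := by gcongr; exacts [abs_im_le_norm z, Real.abs_sin_le_one τ]
    _ = ‖z‖ := mul_one _

lemma hasDerivAt_besselIntegrand (z : ℂ) (s : ℤ) (τ : ℝ) :
    HasDerivAt (besselIntegrand z s)
      (I * (z / 2 * (besselIntegrand z (s - 1) τ + besselIntegrand z (s + 1) τ)
        - s * besselIntegrand z s τ)) τ := by
  have h : HasDerivAt (fun τ : ℝ => I * (z * (Real.sin τ : ℂ) - (s : ℂ) * (τ : ℂ)))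
      (I * (z * Real.cos τ - s)) τ := by
    simpa using (((Real.hasDerivAt_sin τ).ofReal_comp.const_mul z).sub
      ((hasDerivAt_id τ).ofReal_comp.const_mul (s : ℂ))).const_mul I
  refine h.cexp.congr_deriv ?_
  rw [sub_eq_add_neg s 1, besselIntegrand_add_int, besselIntegrand_add_int, ofReal_cos, cos,
    besselIntegrand]
  push_cast
  ring_nf

theorem besselJ_recurrence (s : ℤ) (z : ℂ) :
    s * besselJ s z = z / 2 * (besselJ (s - 1) z + besselJ (s + 1) z) := by
  have hint : ∀ k : ℤ, IntervalIntegrable (besselIntegrand z k) MeasureTheory.volume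
      (-Real.pi) Real.pi := fun k => (continuous_besselIntegrand z k).intervalIntegrable _ _
  have h := intervalIntegral.integral_eq_sub_of_hasDerivAt (a := -Real.pi) (b := Real.pi)
    (fun τ _ => hasDerivAt_besselIntegrand z s τ)
    (((((hint _).add (hint _)).const_mul _).sub ((hint _).const_mul _)).const_mul I)
  rw [besselIntegrand_neg_pi, sub_self, intervalIntegral.integral_const_mul,
    intervalIntegral.integral_sub (((hint _).add (hint _)).const_mul _) ((hint _).const_mul _),
    intervalIntegral.integral_const_mul, intervalIntegral.integral_const_mul,
    intervalIntegral.integral_add (hint _) (hint _)] at h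
  have h' := (mul_eq_zero.mp h).resolve_left I_ne_zero
  simp only [besselJ_eq_integral]
  linear_combination (-(1 / (2 * Real.pi : ℂ))) * h'

lemma norm_besselJ_le (s : ℤ) (z : ℂ) : ‖besselJ s z‖ ≤ Real.exp ‖z‖ := by
  have h := intervalIntegral.norm_integral_le_of_norm_le_const (a := -Real.pi) (b := Real.pi)
    (fun τ _ => norm_besselIntegrand_le z s τ)
  rw [sub_neg_eq_add, abs_of_pos (by positivity)] at h
  rw [besselJ_eq_integral, norm_mul, norm_div, norm_one, norm_mul, norm_ofNat, norm_real,
    Real.norm_of_nonneg Real.pi_pos.le]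
  calc 1 / (2 * Real.pi) * ‖∫ τ in -Real.pi..Real.pi, besselIntegrand z s τ‖
      ≤ 1 / (2 * Real.pi) * (Real.exp ‖z‖ * (Real.pi + Real.pi)) := by gcongr
    _ = Real.exp ‖z‖ := by field_simp; ring

lemma abs_mul_norm_besselJ_le_add (s : ℤ) (z : ℂ) :
    |(s : ℝ)| * ‖besselJ s z‖ ≤ ‖z‖ / 2 * (‖besselJ (s - 1) z‖ + ‖besselJ (s + 1) z‖) := by
  have h := congrArg norm (besselJ_recurrence s z)
  rw [norm_mul, norm_mul, norm_intCast, norm_div, norm_ofNat] at h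
  rw [h]
  gcongr
  exact norm_add_le _ _

lemma abs_mul_norm_besselJ_le (s : ℤ) (z : ℂ) :
    |(s : ℝ)| * ‖besselJ s z‖ ≤ ‖z‖ * Real.exp ‖z‖ :=
  calc |(s : ℝ)| * ‖besselJ s z‖
      ≤ ‖z‖ / 2 * (‖besselJ (s - 1) z‖ + ‖besselJ (s + 1) z‖) :=
        abs_mul_norm_besselJ_le_add s z
    _ ≤ ‖z‖ / 2 * (Real.exp ‖z‖ + Real.exp ‖z‖) := by
      gcongr <;> exact norm_besselJ_le _ _
    _ = ‖z‖ * Real.exp ‖z‖ := by ring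

noncomputable def besselDecayConst (z : ℂ) : ℝ := ‖z‖ * Real.exp ‖z‖ * (1 + 2 * ‖z‖)

lemma sq_mul_norm_besselJ_le (s : ℤ) (z : ℂ) :
    (s : ℝ) ^ 2 * ‖besselJ s z‖ ≤ besselDecayConst z := by
  have hM : 0 ≤ ‖z‖ * Real.exp ‖z‖ := by positivity
  rw [besselDecayConst]
  rcases le_or_gt |s| 1 with hs1 | hs2
  · have hs := abs_mul_norm_besselJ_le s z
    have hs1' : |(s : ℝ)| ≤ 1 := by exact_mod_cast hs1
    calc (s : ℝ) ^ 2 * ‖besselJ s z‖ = |(s : ℝ)| * (|(s : ℝ)| * ‖besselJ s z‖) := by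
          rw [← mul_assoc, ← sq, sq_abs]
      _ ≤ 1 * (‖z‖ * Real.exp ‖z‖) := by gcongr
      _ ≤ ‖z‖ * Real.exp ‖z‖ * (1 + 2 * ‖z‖) := by nlinarith [norm_nonneg z]
  · have hm : |(s : ℝ)| ≤ 2 * |((s - 1 : ℤ) : ℝ)| := by
      have : |s| ≤ 2 * |s - 1| := by
        rcases abs_cases s with h | h <;> rcases abs_cases (s - 1) with h' | h' <;> omega
      exact_mod_cast this
    have hp : |(s : ℝ)| ≤ 2 * |((s + 1 : ℤ) : ℝ)| := by
      have : |s| ≤ 2 * |s + 1| := by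
        rcases abs_cases s with h | h <;> rcases abs_cases (s + 1) with h' | h' <;> omega
      exact_mod_cast this
    have hm' : |(s : ℝ)| * ‖besselJ (s - 1) z‖ ≤ 2 * (‖z‖ * Real.exp ‖z‖) := by
      nlinarith [abs_mul_norm_besselJ_le (s - 1) z, norm_nonneg (besselJ (s - 1) z)]
    have hp' : |(s : ℝ)| * ‖besselJ (s + 1) z‖ ≤ 2 * (‖z‖ * Real.exp ‖z‖) := by
      nlinarith [abs_mul_norm_besselJ_le (s + 1) z, norm_nonneg (besselJ (s + 1) z)]
    calc (s : ℝ) ^ 2 * ‖besselJ s z‖ = |(s : ℝ)| * (|(s : ℝ)| * ‖besselJ s z‖) := by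
          rw [← mul_assoc, ← sq, sq_abs]
      _ ≤ |(s : ℝ)| * (‖z‖ / 2 * (‖besselJ (s - 1) z‖ + ‖besselJ (s + 1) z‖)) :=
          mul_le_mul_of_nonneg_left (abs_mul_norm_besselJ_le_add s z) (abs_nonneg _)
      _ = ‖z‖ / 2 * (|(s : ℝ)| * ‖besselJ (s - 1) z‖ + |(s : ℝ)| * ‖besselJ (s + 1) z‖) := by
          ring
      _ ≤ ‖z‖ / 2 * (2 * (‖z‖ * Real.exp ‖z‖) + 2 * (‖z‖ * Real.exp ‖z‖)) := by gcongr
      _ ≤ ‖z‖ * Real.exp ‖z‖ * (1 + 2 * ‖z‖) := by nlinarith [norm_nonneg z]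

lemma norm_besselJ_le_div_sq (z : ℂ) {s : ℤ} (hs : s ≠ 0) :
    ‖besselJ s z‖ ≤ besselDecayConst z / (s : ℝ) ^ 2 := by
  rw [le_div_iff₀ (by positivity), mul_comm]
  exact sq_mul_norm_besselJ_le s z

lemma summable_one_div_int_sq_ne_zero :
    Summable (fun m : {m : ℤ // m ≠ 0} => 1 / ((m : ℤ) : ℝ) ^ 2) :=
  (Real.summable_one_div_int_pow.mpr one_lt_two).subtype _

lemma norm_zpow_I_mul_mul (s : ℤ) (w : ℂ) {u : ℂ} (hu : ‖u‖ = 1) :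
    ‖I ^ s * w * u‖ = ‖w‖ := by
  rw [norm_mul, norm_mul, norm_zpow, norm_I, one_zpow, one_mul, hu, mul_one]

lemma summable_errE (θ φ : ℝ) (z : ℂ) :
    Summable (fun s : {s : ℤ // s ≠ 0} =>
      I ^ (s : ℤ) * besselJ s z * exp (I * ((s : ℤ) : ℂ) * ((θ : ℂ) - (φ : ℂ)))) := by
  refine .of_norm_bounded (summable_one_div_int_sq_ne_zero.mul_left (besselDecayConst z))
    fun s => ?_
  rw [norm_zpow_I_mul_mul _ _ (by simp [norm_exp]), mul_one_div]
  exact norm_besselJ_le_div_sq z s.2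

lemma sum_pow_succ_eq_ite {K : Type*} [DivisionRing K] [DecidableEq K] {w : K} {N : ℕ}
    (hw : w ^ N = 1) :
    ∑ n : Fin N, w ^ ((n : ℕ) + 1) = if w = 1 then (N : K) else 0 := by
  split_ifs with h1
  · simp [h1]
  · simp_rw [pow_succ]
    rw [Fin.sum_univ_eq_sum_range (fun n => w ^ n * w), ← Finset.sum_mul, geom_sum_eq h1, hw,
      sub_self, zero_div, zero_mul]

lemma sum_exp_two_pi_I_mul_div {N : ℕ} (hN : N ≠ 0) (s : ℤ) :
    ∑ n : Fin N, exp (I * s * ((2 * Real.pi * ((n : ℕ) + 1 : ℝ) / N : ℝ) : ℂ))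
      = if (N : ℤ) ∣ s then (N : ℂ) else 0 := by
  have hζ := isPrimitiveRoot_exp N hN
  have hterm : ∀ n : Fin N, exp (I * s * ((2 * Real.pi * ((n : ℕ) + 1 : ℝ) / N : ℝ) : ℂ))
      = (exp (2 * Real.pi * I / N) ^ s) ^ ((n : ℕ) + 1) := by
    intro n
    rw [← zpow_natCast, ← zpow_mul, ← exp_int_mul]
    congr 1
    push_cast
    ring
  have hN1 : (exp (2 * Real.pi * I / N) ^ s) ^ N = 1 := by
    rw [← zpow_natCast, ← zpow_mul, mul_comm s, zpow_mul, zpow_natCast, hζ.pow_eq_one,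
      one_zpow]
  simp only [hterm, sum_pow_succ_eq_ite hN1, hζ.zpow_eq_one_iff_dvd]

lemma tsum_ite_dvd_eq_tsum_mul {α : Type*} [AddCommMonoid α] [TopologicalSpace α] {N : ℤ}
    (hN : N ≠ 0) (f : ℤ → α) :
    ∑' s : {s : ℤ // s ≠ 0}, (if N ∣ s then f s else 0)
      = ∑' m : {m : ℤ // m ≠ 0}, f (m * N) := by
  let g : {m : ℤ // m ≠ 0} → {s : ℤ // s ≠ 0} := fun m => ⟨m * N, mul_ne_zero m.2 hN⟩
  have hg : Function.Injective g := fun a b hab =>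
    Subtype.ext (mul_right_cancel₀ hN (congrArg Subtype.val hab))
  have hsupp : Function.support (fun s : {s : ℤ // s ≠ 0} => if N ∣ s then f s else 0)
      ⊆ Set.range g := by
    rintro ⟨s, hs⟩ hfs
    obtain ⟨k, rfl⟩ : N ∣ s := by by_contra h; simp [h] at hfs
    exact ⟨⟨k, right_ne_zero_of_mul hs⟩, Subtype.ext (mul_comm _ _)⟩
  rw [← hg.tsum_eq hsupp]
  simp [g]

noncomputable def aliasedError (z : ℂ) (φ : ℝ) (N : ℕ) : ℂ :=
  ∑' m : {m : ℤ // m ≠ 0},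
    I ^ ((m : ℤ) * N) * besselJ ((m : ℤ) * N) z *
      exp (-(I * ((m : ℤ) : ℂ) * (N : ℂ) * (φ : ℂ)))

lemma average_errE_eq_aliasedError (z : ℂ) (φ : ℝ) {N : ℕ} (hN : N ≠ 0) :
    (1 / (N : ℂ)) * ∑ n : Fin N, errE (2 * Real.pi * ((n : ℕ) + 1 : ℝ) / N) φ z
      = aliasedError z φ N := by
  have hNZ : (N : ℤ) ≠ 0 := by exact_mod_cast hN
  have hinner : ∀ s : {s : ℤ // s ≠ 0},
      1 / (N : ℂ) * ∑ n : Fin N, I ^ (s : ℤ) * besselJ s z *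
          exp (I * ((s : ℤ) : ℂ) * (((2 * Real.pi * ((n : ℕ) + 1 : ℝ) / N : ℝ) : ℂ) - (φ : ℂ)))
        = if (N : ℤ) ∣ s then I ^ (s : ℤ) * besselJ s z * exp (-(I * ((s : ℤ) : ℂ) * (φ : ℂ)))
          else 0 := by
    intro s
    simp_rw [mul_sub, sub_eq_neg_add, exp_add, ← mul_assoc]
    rw [← Finset.mul_sum, sum_exp_two_pi_I_mul_div hN]
    split_ifs
    · field_simp
    · rw [mul_zero, mul_zero]
  simp only [errE]
  rw [← Summable.tsum_finsetSum fun n _ => summable_errE _ φ z, ← tsum_mul_left,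
    tsum_congr hinner,
    tsum_ite_dvd_eq_tsum_mul hNZ (fun s => I ^ s * besselJ s z * exp (-(I * s * φ))), aliasedError]
  simp only [Int.cast_mul, Int.cast_natCast, mul_assoc]

lemma tendsto_aliasedError (z : ℂ) (φ : ℝ) :
    Filter.Tendsto (aliasedError z φ) Filter.atTop (nhds 0) := by
  set C := besselDecayConst z
  set S := ∑' m : {m : ℤ // m ≠ 0}, 1 / ((m : ℤ) : ℝ) ^ 2
  refine squeeze_zero_norm' ?_ (tendsto_const_div_pow (C * S) 2 two_ne_zero)
  filter_upwards [Filter.eventually_ne_atTop 0] with N hN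
  calc ‖aliasedError z φ N‖ ≤ C / N ^ 2 * S :=
        tsum_of_norm_bounded (summable_one_div_int_sq_ne_zero.hasSum.mul_left _) fun m => ?_
    _ = C * S / N ^ 2 := by ring
  have hmN : (m : ℤ) * N ≠ 0 := mul_ne_zero m.2 (by exact_mod_cast hN)
  rw [norm_zpow_I_mul_mul _ _ (by simp [norm_exp])]
  calc ‖besselJ ((m : ℤ) * N) z‖ ≤ C / (((m : ℤ) * N : ℤ) : ℝ) ^ 2 :=
        norm_besselJ_le_div_sq z hmN
    _ = C / N ^ 2 * (1 / ((m : ℤ) : ℝ) ^ 2) := by push_cast; ring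

/-- Vanishing of the averaged error term for large uniform circular arrays:
`lim_{N → ∞} (1/N) Σ_{n=1}^{N} E(2πn/N, φ, z) = 0`, equivalently
`lim_{N → ∞} Σ_{m ≠ 0} i^{mN} J_{mN}(z) e^{−imNφ} = 0`. -/
theorem stmt9 (z : ℂ) (φ : ℝ) :
    Filter.Tendsto (fun N : ℕ =>
        (1 / (N : ℂ)) * ∑ n : Fin N, errE (2 * Real.pi * ((n : ℕ) + 1 : ℝ) / N) φ z)
      Filter.atTop (nhds 0) ∧
    Filter.Tendsto (fun N : ℕ => ∑' m : {m : ℤ // m ≠ 0},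
        Complex.I ^ ((m : ℤ) * N) * besselJ ((m : ℤ) * N) z *
          Complex.exp (-(Complex.I * ((m : ℤ) : ℂ) * (N : ℂ) * (φ : ℂ))))
      Filter.atTop (nhds 0) := by
  refine ⟨(tendsto_aliasedError z φ).congr' ?_, tendsto_aliasedError z φ⟩
  filter_upwards [Filter.eventually_ne_atTop 0] with N hN
  exact (average_errE_eq_aliasedError z φ hN).symm
end
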